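/- For every fixed integer r, there is a constant C such that for all odd primes p not dividing r, the Haar measure of the set of triples (a,b,c) ∈ ℤ_p³ with ab+r, bc+r, ac+r all squares in ℤ_p differs from 1/8 by at most C/p. -/

import Mathlib

open MeasureTheory

noncomputable instance (p : ℕ) [Fact p.Prime] : MeasurableSpace ℤ_[p] := borel _
instance (p : ℕ) [Fact p.Prime] : BorelSpace ℤ_[p] := ⟨rfl⟩

/-- The Haar measure on ℤ_p, normalized so that μ(ℤ_p) = 1. -/
noncomputable def μZp (p : ℕ) [Fact p.Prime] : Measure ℤ_[p] :=
  Measure.addHaarMeasure ⊤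

/-!
Reduce modulo `p`. For odd `p`, an element of `ℤ_p` with nonzero square residue is a square
(Hensel), and squares have square residues; as `toZMod` pushes the Haar measure forward to the
uniform measure on `𝔽_p`, the measure in question lies between `N₁ / p³` and `N₂ / p³`, where
`N₁` (resp. `N₂`) counts the triples in `𝔽_p³` for which `ab + r, bc + r, ac + r` are nonzero
squares (resp. squares).

Both counts are `p³ / 8 + O(p²)`. Off the `O(p²)` triples where one of the three values vanishes,
the indicator times `8` is `∏ (1 + χ(·))` with `χ` the quadratic character. Summing this product
over `c` first, the only non-trivial term is `∑_c χ(ac + r) χ(bc + r) = -χ(ab)` (a Jacobi sum)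
when `a, b ≠ 0` and `a ≠ b`, so the full sum is `p³ + O(p²)`.
-/

open Finset

def triplesWith {R : Type*} [Mul R] [Add R] (P : R → Prop) (r : R) : Set (R × R × R) :=
  {t | P (t.1 * t.2.1 + r) ∧ P (t.2.1 * t.2.2 + r) ∧ P (t.1 * t.2.2 + r)}

def tripleMap {α β : Type*} (f : α → β) : α × α × α → β × β × β := Prod.map f (Prod.map f f)

theorem triplesWith_mono {R : Type*} [Mul R] [Add R] {P Q : R → Prop} (h : ∀ u, P u → Q u)
    (r : R) : triplesWith P r ⊆ triplesWith Q r :=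
  fun _ ⟨h₁, h₂, h₃⟩ => ⟨h _ h₁, h _ h₂, h _ h₃⟩

theorem preimage_tripleMap_triplesWith {R S : Type*} [NonAssocSemiring R] [NonAssocSemiring S]
    (f : R →+* S) (Q : S → Prop) (r : R) :
    tripleMap f ⁻¹' triplesWith Q (f r) = triplesWith (Q ∘ f) r := by
  ext t
  simp [triplesWith, tripleMap, map_add, map_mul]

theorem preimage_tripleMap_singleton {α β : Type*} (f : α → β) (t : β × β × β) :
    tripleMap f ⁻¹' {t} = (f ⁻¹' {t.1}) ×ˢ (f ⁻¹' {t.2.1}) ×ˢ (f ⁻¹' {t.2.2}) := by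
  ext x
  simp [tripleMap, Prod.ext_iff]

section CharacterSums
variable {F : Type*} [Field F] [Fintype F] [DecidableEq F]

local notation "χ" => quadraticChar F
local notation "q" => (Fintype.card F : ℤ)

theorem sum_quadraticChar_mul_add (hF : ringChar F ≠ 2) (a r : F) :
    ∑ c, χ (a * c + r) = if a = 0 then q * χ r else 0 := by
  split_ifs with ha
  · simp [ha]
  · rw [← quadraticChar_sum_zero hF]
    exact Fintype.sum_equiv ((Equiv.mulLeft₀ a ha).trans (Equiv.addRight r)) _ _ fun _ => rfl

theorem sum_quadraticChar_add_mul_add (hF : ringChar F ≠ 2) {α β : F} (h : α ≠ β) :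
    ∑ x, χ ((x + α) * (x + β)) = -1 := by
  have hs : α - β ≠ 0 := sub_ne_zero.mpr h
  have hJ : ∑ y, χ y * χ (1 - y) = -χ (-1) := by
    simpa [jacobiSum, (quadraticChar_isQuadratic F).inv] using
      jacobiSum_nontrivial_inv (quadraticChar_ne_one hF)
  have hsq : χ (-1) * χ (-1) = 1 := by rw [← map_mul, neg_mul_neg, one_mul, map_one]
  -- substituting `x = -(α - β) y - β` turns the sum into `χ(-1)` times the Jacobi sum `J(χ, χ)`
  have hsubst (y : F) : χ ((-(α - β) * y - β + α) * (-(α - β) * y - β + β)) =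
      χ (-1) * (χ y * χ (1 - y)) := by
    rw [← map_mul, ← map_mul, ← one_mul (χ (-1 * _)), ← quadraticChar_sq_one' hs, ← map_mul]
    congr 1
    ring
  rw [← Fintype.sum_equiv ((Equiv.mulLeft₀ _ (neg_ne_zero.mpr hs)).trans (Equiv.subRight β)) _ _
    fun _ => rfl]
  simp only [Equiv.trans_apply, Equiv.mulLeft₀_apply, Equiv.subRight_apply, hsubst, ← mul_sum, hJ,
    mul_neg, hsq]

theorem sum_quadraticChar_mul_add_mul_mul_add (hF : ringChar F ≠ 2) {a b r : F} (ha : a ≠ 0)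
    (hb : b ≠ 0) (hab : a ≠ b) (hr : r ≠ 0) :
    ∑ c, χ (a * c + r) * χ (b * c + r) = -χ (a * b) := by
  have hne : r / a ≠ r / b := by
    rwa [Ne, div_eq_div_iff ha hb, mul_right_inj' hr, eq_comm]
  have h (c : F) : χ (a * c + r) * χ (b * c + r) = χ (a * b) * χ ((c + r / a) * (c + r / b)) := by
    rw [← map_mul, ← map_mul]
    congr 1
    field_simp
  simp only [h, ← mul_sum, sum_quadraticChar_add_mul_add hF hne, mul_neg, mul_one]

theorem one_add_quadraticChar_mem_Icc (u : F) : 1 + χ u ∈ Set.Icc (0 : ℤ) 2 := by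
  rcases quadraticChar_isQuadratic F u with h | h | h <;> simp [h]

theorem abs_sum_one_add_quadraticChar_mul_sub_card_le (hF : ringChar F ≠ 2) {r : F} (hr : r ≠ 0)
    (a b : F) :
    |∑ c, (1 + χ (a * c + r)) * (1 + χ (b * c + r)) - q| ≤
      if a = 0 ∨ b = 0 ∨ a = b then 3 * q else 1 := by
  split_ifs with hdeg
  · have hnonneg : 0 ≤ ∑ c, (1 + χ (a * c + r)) * (1 + χ (b * c + r)) :=
      sum_nonneg fun c _ => mul_nonneg (one_add_quadraticChar_mem_Icc _).1
        (one_add_quadraticChar_mem_Icc _).1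
    have hle : ∑ c, (1 + χ (a * c + r)) * (1 + χ (b * c + r)) ≤ ∑ _c : F, 2 * 2 :=
      sum_le_sum fun c _ => mul_le_mul (one_add_quadraticChar_mem_Icc _).2
        (one_add_quadraticChar_mem_Icc _).2 (one_add_quadraticChar_mem_Icc _).1 zero_le_two
    rw [sum_const, card_univ, nsmul_eq_mul] at hle
    rw [abs_le]
    constructor <;> linarith
  · obtain ⟨ha, hb, hab⟩ := not_or.mp hdeg |>.imp_right not_or.mp
    simp only [add_mul, one_mul, mul_add, mul_one, sum_add_distrib, sum_quadraticChar_mul_add hF,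
      if_neg ha, if_neg hb, sum_quadraticChar_mul_add_mul_mul_add hF ha hb hab hr]
    rcases quadraticChar_isQuadratic F (a * b) with h | h | h <;> simp [h]

theorem sum_sum_one_add_quadraticChar (hF : ringChar F ≠ 2) (r : F) :
    ∑ a, ∑ b, (1 + χ (a * b + r)) = q ^ 2 + q * χ r := by
  simp only [sum_add_distrib, sum_quadraticChar_mul_add hF, sum_ite_eq', mem_univ, if_true,
    sum_const, card_univ, nsmul_eq_mul]
  ring

theorem sum_sum_degenerate_pair_le :
    ∑ a : F, ∑ b : F, (if a = 0 ∨ b = 0 ∨ a = b then 3 * q else 1) ≤ 10 * q ^ 2 := by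
  have h (a b : F) : (if a = 0 ∨ b = 0 ∨ a = b then 3 * q else 1) ≤
      1 + 3 * q * ((if a = 0 then 1 else 0) + (if b = 0 then 1 else 0) + if a = b then 1 else 0) := by
    have : (0 : ℤ) ≤ q := by positivity
    split_ifs <;> simp_all
    linarith
  refine (sum_le_sum fun a _ => sum_le_sum fun b _ => h a b).trans_eq ?_
  simp only [mul_add, sum_add_distrib, ← mul_sum, sum_ite_eq, sum_ite_eq', mem_univ, if_true,
    sum_const, card_univ, nsmul_eq_mul]
  ring

theorem abs_sum_prod_one_add_quadraticChar_sub_le (hF : ringChar F ≠ 2) {r : F} (hr : r ≠ 0) :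
    |∑ a, ∑ b, ∑ c, (1 + χ (a * b + r)) * (1 + χ (b * c + r)) * (1 + χ (a * c + r)) - q ^ 3| ≤
      21 * q ^ 2 := by
  set I : F → F → ℤ := fun a b => ∑ c, (1 + χ (b * c + r)) * (1 + χ (a * c + r))
  have hsplit : ∑ a, ∑ b, ∑ c, (1 + χ (a * b + r)) * (1 + χ (b * c + r)) * (1 + χ (a * c + r)) -
      q ^ 3 = ∑ a, ∑ b, (1 + χ (a * b + r)) * (I a b - q) + q ^ 2 * χ r := by
    have := sum_sum_one_add_quadraticChar hF r
    simp only [I, mul_sub, sum_sub_distrib, mul_sum, mul_assoc]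
    simp only [← sum_mul, this]
    ring
  have hmain : |∑ a, ∑ b, (1 + χ (a * b + r)) * (I a b - q)| ≤ 20 * q ^ 2 := calc
    _ ≤ ∑ a : F, ∑ b : F, 2 * (if b = 0 ∨ a = 0 ∨ b = a then 3 * q else 1) := by
      refine (abs_sum_le_sum_abs _ _).trans (sum_le_sum fun a _ => ?_)
      refine (abs_sum_le_sum_abs _ _).trans (sum_le_sum fun b _ => ?_)
      rw [abs_mul, abs_of_nonneg (one_add_quadraticChar_mem_Icc _).1]
      exact mul_le_mul (one_add_quadraticChar_mem_Icc _).2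
        (abs_sum_one_add_quadraticChar_mul_sub_card_le hF hr b a) (abs_nonneg _) zero_le_two
    _ ≤ 20 * q ^ 2 := by
      rw [sum_comm]
      simp only [← mul_sum]
      linarith [sum_sum_degenerate_pair_le (F := F)]
  have hχr : |q ^ 2 * χ r| ≤ q ^ 2 := by
    rw [abs_mul, abs_of_nonneg (by positivity)]
    rcases quadraticChar_isQuadratic F r with h | h | h <;> simp [h]
  rw [hsplit]
  exact (abs_add_le _ _).trans (by linarith)

theorem sum_ite_mul_add_eq_zero_le_one {r : F} (hr : r ≠ 0) (a : F) :
    ∑ b, (if a * b + r = 0 then 1 else 0 : ℤ) ≤ 1 := by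
  rw [sum_boole, Nat.cast_le_one, card_le_one]
  intro b hb c hc
  simp only [mem_filter, mem_univ, true_and] at hb hc
  have ha : a ≠ 0 := by rintro rfl; exact hr (by simpa using hb)
  exact mul_left_cancel₀ ha (add_right_cancel (hb.trans hc.symm))

theorem sum_sum_sum_ite_eq_zero_le {r : F} (hr : r ≠ 0) :
    ∑ a : F, ∑ b : F, ∑ c : F, ((if a * b + r = 0 then 1 else 0) + (if b * c + r = 0 then 1 else 0) +
      (if a * c + r = 0 then 1 else 0) : ℤ) ≤ 3 * q ^ 2 := by
  have hsq : ∑ _a : F, ∑ _b : F, (1 : ℤ) = q ^ 2 := by simp [sq]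
  have hab : ∑ a : F, ∑ b : F, ∑ _c : F, (if a * b + r = 0 then 1 else 0 : ℤ) ≤ q ^ 2 :=
    hsq ▸ sum_le_sum fun a _ => sum_comm.trans_le <|
      sum_le_sum fun _ _ => sum_ite_mul_add_eq_zero_le_one hr a
  have hbc : ∑ _a : F, ∑ b : F, ∑ c : F, (if b * c + r = 0 then 1 else 0 : ℤ) ≤ q ^ 2 :=
    hsq ▸ sum_le_sum fun _ _ => sum_le_sum fun b _ => sum_ite_mul_add_eq_zero_le_one hr b
  have hac : ∑ a : F, ∑ _b : F, ∑ c : F, (if a * c + r = 0 then 1 else 0 : ℤ) ≤ q ^ 2 :=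
    hsq ▸ sum_le_sum fun a _ => sum_le_sum fun _ _ => sum_ite_mul_add_eq_zero_le_one hr a
  simp only [sum_add_distrib]
  linarith

theorem one_add_quadraticChar_of_ne_zero {u : F} (hu : u ≠ 0) [Decidable (IsSquare u)] :
    1 + χ u = if IsSquare u then 2 else 0 := by
  split_ifs with h
  · rw [(quadraticChar_one_iff_isSquare hu).mpr h]; rfl
  · rw [quadraticChar_neg_one_iff_not_isSquare.mpr h]; rfl

theorem abs_ite_sub_prod_one_add_quadraticChar_le {P : F → Prop} [DecidablePred P]
    (hP : ∀ u, u ≠ 0 → (P u ↔ IsSquare u)) (u v w : F) :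
    |8 * (if P u ∧ P v ∧ P w then 1 else 0) - (1 + χ u) * (1 + χ v) * (1 + χ w)| ≤
      8 * ((if u = 0 then 1 else 0) + (if v = 0 then 1 else 0) + (if w = 0 then 1 else 0)) := by
  by_cases hzero : u = 0 ∨ v = 0 ∨ w = 0
  · obtain ⟨hu₀, hu₂⟩ := one_add_quadraticChar_mem_Icc u
    obtain ⟨hv₀, hv₂⟩ := one_add_quadraticChar_mem_Icc v
    obtain ⟨hw₀, hw₂⟩ := one_add_quadraticChar_mem_Icc w
    have h₀ : 0 ≤ (1 + χ u) * (1 + χ v) * (1 + χ w) := by positivity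
    have h₈ : (1 + χ u) * (1 + χ v) * (1 + χ w) ≤ 2 * 2 * 2 := by gcongr
    have hrhs : (8 : ℤ) ≤ 8 * ((if u = 0 then 1 else 0) + (if v = 0 then 1 else 0) +
        (if w = 0 then 1 else 0)) := by
      rcases hzero with h | h | h <;> simp only [h, if_true] <;> split_ifs <;> norm_num
    refine le_trans ?_ hrhs
    rw [abs_le]
    split_ifs <;> constructor <;> linarith
  · obtain ⟨hu, hv, hw⟩ := not_or.mp hzero |>.imp_right not_or.mp
    rw [one_add_quadraticChar_of_ne_zero hu, one_add_quadraticChar_of_ne_zero hv,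
      one_add_quadraticChar_of_ne_zero hw]
    simp only [hP u hu, hP v hv, hP w hw, hu, hv, hw, if_false]
    split_ifs <;> simp_all

theorem abs_eight_mul_ncard_triplesWith_sub_le (hF : ringChar F ≠ 2) {r : F} (hr : r ≠ 0)
    {P : F → Prop} (hP : ∀ u, u ≠ 0 → (P u ↔ IsSquare u)) :
    |8 * ((triplesWith P r).ncard : ℤ) - q ^ 3| ≤ 45 * q ^ 2 := by
  classical
  have hcard : 8 * ((triplesWith P r).ncard : ℤ) = ∑ a, ∑ b, ∑ c,
      8 * if P (a * b + r) ∧ P (b * c + r) ∧ P (a * c + r) then 1 else 0 := by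
    rw [Set.ncard_eq_toFinset_card', ← Set.filter_mem_univ_eq_toFinset, natCast_card_filter,
      mul_sum]
    simp only [Fintype.sum_prod_type]
    exact sum_congr rfl fun a _ => sum_congr rfl fun b _ => sum_congr rfl fun c _ =>
      congrArg _ (if_congr Iff.rfl rfl rfl)
  have hcompare : |8 * ((triplesWith P r).ncard : ℤ) -
      ∑ a, ∑ b, ∑ c, (1 + χ (a * b + r)) * (1 + χ (b * c + r)) * (1 + χ (a * c + r))| ≤
      24 * q ^ 2 := calc
    _ ≤ ∑ a : F, ∑ b : F, ∑ c : F, 8 * ((if a * b + r = 0 then 1 else 0) +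
        (if b * c + r = 0 then 1 else 0) + (if a * c + r = 0 then 1 else 0) : ℤ) := by
      rw [hcard]
      simp only [← sum_sub_distrib]
      refine (abs_sum_le_sum_abs _ _).trans (sum_le_sum fun a _ => ?_)
      refine (abs_sum_le_sum_abs _ _).trans (sum_le_sum fun b _ => ?_)
      exact (abs_sum_le_sum_abs _ _).trans (sum_le_sum fun c _ =>
        abs_ite_sub_prod_one_add_quadraticChar_le hP _ _ _)
    _ ≤ 24 * q ^ 2 := by
      simp only [← mul_sum]
      linarith [sum_sum_sum_ite_eq_zero_le hr]
  have := abs_sum_prod_one_add_quadraticChar_sub_le hF hr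
  calc _ ≤ _ := abs_sub_le _ _ _
    _ ≤ 45 * q ^ 2 := by linarith

theorem abs_ncard_triplesWith_div_sub_le (hF : ringChar F ≠ 2) {r : F} (hr : r ≠ 0)
    {P : F → Prop} (hP : ∀ u, u ≠ 0 → (P u ↔ IsSquare u)) :
    |((triplesWith P r).ncard : ℝ) / Fintype.card F ^ 3 - 1 / 8| ≤ 6 / (Fintype.card F : ℝ) := by
  have hcount : |8 * ((triplesWith P r).ncard : ℝ) - (Fintype.card F : ℝ) ^ 3| ≤
      45 * (Fintype.card F : ℝ) ^ 2 := by
    exact_mod_cast abs_eight_mul_ncard_triplesWith_sub_le hF hr hP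
  have hq : (0 : ℝ) < Fintype.card F := by exact_mod_cast Fintype.card_pos
  rw [show ((triplesWith P r).ncard : ℝ) / Fintype.card F ^ 3 - 1 / 8 =
      (8 * (triplesWith P r).ncard - Fintype.card F ^ 3) / (8 * Fintype.card F ^ 3) by
    field_simp, abs_div, abs_of_pos (by positivity : (0 : ℝ) < 8 * Fintype.card F ^ 3),
    div_le_div_iff₀ (by positivity) hq]
  nlinarith

end CharacterSums

namespace PadicInt
variable {p : ℕ} [Fact p.Prime]

theorem toZMod_eq_zero_iff_norm_lt_one {x : ℤ_[p]} : toZMod x = 0 ↔ ‖x‖ < 1 := by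
  rw [← RingHom.mem_ker, ker_toZMod, IsLocalRing.mem_maximalIdeal, mem_nonunits]

theorem toZMod_natCast_val (a : ZMod p) : toZMod (a.val : ℤ_[p]) = a := by
  rw [map_natCast, ZMod.natCast_zmod_val]

theorem norm_eq_one_iff_toZMod_ne_zero {x : ℤ_[p]} : ‖x‖ = 1 ↔ toZMod x ≠ 0 := by
  rw [Ne, toZMod_eq_zero_iff_norm_lt_one, not_lt]
  exact ⟨ge_of_eq, (norm_le_one x).antisymm⟩

theorem isSquare_of_isSquare_toZMod (hp : p ≠ 2) {z : ℤ_[p]} (hz : toZMod z ≠ 0)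
    (hsq : IsSquare (toZMod z)) : IsSquare z := by
  obtain ⟨s, hs⟩ := hsq
  set a : ℤ_[p] := (s.val : ℤ_[p])
  have hta : toZMod a = s := toZMod_natCast_val s
  have h2 : (2 : ZMod p) ≠ 0 := Ring.two_ne_zero (by rwa [ZMod.ringChar_zmod_n])
  have hs0 : s ≠ 0 := by rintro rfl; exact hz (by simpa using hs)
  have hnorm : ‖(Polynomial.X ^ 2 - Polynomial.C z).aeval a‖ <
      ‖(Polynomial.X ^ 2 - Polynomial.C z).derivative.aeval a‖ ^ 2 := by
    have hderiv : ‖(2 : ℤ_[p]) * a‖ = 1 := by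
      rw [norm_eq_one_iff_toZMod_ne_zero, map_mul, map_ofNat, hta]
      exact mul_ne_zero h2 hs0
    have hderiv' : (Polynomial.X ^ 2 - Polynomial.C z).derivative.aeval a = 2 * a := by
      simp [one_add_one_eq_two]
    rw [hderiv', hderiv, one_pow, ← toZMod_eq_zero_iff_norm_lt_one]
    simp [hta, hs, sq]
  obtain ⟨w, hw, -⟩ := hensels_lemma hnorm
  exact ⟨w, by simpa [sub_eq_zero, sq, eq_comm] using hw⟩

theorem preimage_toZMod_singleton (y : ℤ_[p]) : toZMod ⁻¹' {toZMod y} = Metric.ball y 1 := by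
  ext x
  rw [Set.mem_preimage, Set.mem_singleton_iff, ← sub_eq_zero, ← map_sub,
    toZMod_eq_zero_iff_norm_lt_one, Metric.mem_ball, dist_eq_norm]

theorem measurableSet_preimage_toZMod_singleton (a : ZMod p) :
    MeasurableSet (toZMod ⁻¹' {a} : Set ℤ_[p]) := by
  rw [← toZMod_natCast_val a, preimage_toZMod_singleton]
  exact Metric.isOpen_ball.measurableSet

end PadicInt

open PadicInt

section HaarMeasure
variable {p : ℕ} [Fact p.Prime]

instance : IsProbabilityMeasure (μZp p) :=
  ⟨Measure.addHaarMeasure_self (K₀ := ⊤)⟩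

instance : (μZp p).IsAddLeftInvariant := by
  rw [μZp]; infer_instance

theorem μZp_preimage_toZMod_singleton (a : ZMod p) : μZp p (toZMod ⁻¹' {a}) = (p : ENNReal)⁻¹ := by
  set H := (toZMod : ℤ_[p] →+* ZMod p).toAddMonoidHom.ker
  have hH : (H : Set ℤ_[p]) = toZMod ⁻¹' {0} := rfl
  have hindex : H.index = p := by
    rw [AddSubgroup.index_ker, AddMonoidHom.range_eq_top.mpr ?_]
    · simp
    · exact fun a => ⟨_, toZMod_natCast_val a⟩
  have hfiber : toZMod ⁻¹' {a} = (fun x => -(a.val : ℤ_[p]) + x) ⁻¹' (H : Set ℤ_[p]) := by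
    ext x
    rw [Set.mem_preimage, Set.mem_preimage, hH, Set.mem_preimage, Set.mem_singleton_iff,
      Set.mem_singleton_iff, map_add, map_neg, toZMod_natCast_val, neg_add_eq_zero, eq_comm]
  have := H.index_mul_measure (hH ▸ measurableSet_preimage_toZMod_singleton 0) (μZp p)
  rw [measure_univ, hindex] at this
  rw [hfiber, measure_preimage_add]
  exact ENNReal.eq_inv_of_mul_eq_one_left (by rwa [mul_comm] at this)

theorem measureReal_preimage_toZMod_singleton (a : ZMod p) :
    (μZp p).real (toZMod ⁻¹' {a}) = (p : ℝ)⁻¹ := by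
  simp [measureReal_def, μZp_preimage_toZMod_singleton]

theorem measureReal_preimage_tripleMap_toZMod (T : Set (ZMod p × ZMod p × ZMod p)) :
    ((μZp p).prod ((μZp p).prod (μZp p))).real (tripleMap toZMod ⁻¹' T) = T.ncard / p ^ 3 := by
  obtain ⟨s, rfl⟩ : ∃ s : Finset _, ↑s = T := ⟨T.toFinite.toFinset, by simp⟩
  have hfiber (t : ZMod p × ZMod p × ZMod p) :
      MeasurableSet (tripleMap toZMod ⁻¹' {t} : Set (ℤ_[p] × ℤ_[p] × ℤ_[p])) := by
    rw [preimage_tripleMap_singleton]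
    exact (measurableSet_preimage_toZMod_singleton _).prod
      ((measurableSet_preimage_toZMod_singleton _).prod (measurableSet_preimage_toZMod_singleton _))
  rw [← sum_measureReal_preimage_singleton s fun t _ => hfiber t, Set.ncard_coe_finset]
  simp only [preimage_tripleMap_singleton, measureReal_prod_prod,
    measureReal_preimage_toZMod_singleton, Finset.sum_const, nsmul_eq_mul]
  ring

end HaarMeasure

theorem stmt19 (r : ℤ) :
    ∃ C : ℝ, ∀ (p : ℕ) (hp : p.Prime), p ≠ 2 → ¬ ((p:ℤ) ∣ r) →
      haveI : Fact p.Prime := ⟨hp⟩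
      |(((μZp p).prod ((μZp p).prod (μZp p)))
          {x : ℤ_[p] × ℤ_[p] × ℤ_[p] |
            IsSquare (x.1 * x.2.1 + (r : ℤ_[p])) ∧
            IsSquare (x.2.1 * x.2.2 + (r : ℤ_[p])) ∧
            IsSquare (x.1 * x.2.2 + (r : ℤ_[p]))}).toReal - 1/8| ≤ C / p := by
  refine ⟨6, fun p hp hp2 hpr => ?_⟩
  have : Fact p.Prime := ⟨hp⟩
  have hF : ringChar (ZMod p) ≠ 2 := by rwa [ZMod.ringChar_zmod_n]
  have hr : toZMod (r : ℤ_[p]) ≠ 0 := by rwa [map_intCast, Ne, ZMod.intCast_zmod_eq_zero_iff_dvd]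
  set μ₃ := (μZp p).prod ((μZp p).prod (μZp p))
  change |μ₃.real (triplesWith IsSquare (r : ℤ_[p])) - 1 / 8| ≤ 6 / p
  have hlower := measureReal_mono (μ := μ₃) <| (preimage_tripleMap_triplesWith toZMod
    (fun u => u ≠ 0 ∧ IsSquare u) (r : ℤ_[p])).trans_subset <|
    triplesWith_mono (fun _ h => isSquare_of_isSquare_toZMod hp2 h.1 h.2) _
  have hupper := measureReal_mono (μ := μ₃) <|
    (triplesWith_mono (fun u (h : IsSquare u) => h.map toZMod) (r : ℤ_[p])).trans_eq
      (preimage_tripleMap_triplesWith toZMod IsSquare (r : ℤ_[p])).symm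
  rw [measureReal_preimage_tripleMap_toZMod] at hlower hupper
  have hgood := abs_ncard_triplesWith_div_sub_le hF hr (P := fun u => u ≠ 0 ∧ IsSquare u)
    fun u hu => and_iff_right hu
  have hsq := abs_ncard_triplesWith_div_sub_le hF hr (P := IsSquare) fun _ _ => Iff.rfl
  rw [ZMod.card] at hgood hsq
  rw [abs_le] at hgood hsq ⊢
  constructor <;> linarith [hgood.1, hsq.2]
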